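/- Let ε > 0 and let B be a bounded linear operator on E with ‖A − B‖ ≤ ε. Then for every f ∈ E one has ‖(A − B)f‖ ≤ 2ε·‖f − Af‖. -/

import Mathlib

noncomputable section

open Metric

/-- The closed disk of radius 1/2 centered at 1 in ℂ. -/
def K : Set ℂ := Metric.closedBall 1 (1/2)

instance : CompactSpace K :=
  isCompact_iff_compactSpace.mp (isCompact_closedBall 1 (1/2))

open scoped Classical in
/-- Extension of a continuous function on K to ℂ by 0. -/
def extendFn (f : C(K, ℂ)) : ℂ → ℂ := fun z => if h : z ∈ K then f ⟨z, h⟩ else 0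

/-- The subspace of C(K, ℂ) of functions holomorphic on the interior of K. -/
def Esub : Submodule ℂ C(K, ℂ) where
  carrier := {f | DifferentiableOn ℂ (extendFn f) (interior K)}
  add_mem' := by
    intro f g hf hg
    have h : extendFn (f + g) = extendFn f + extendFn g := by
      funext z; by_cases h : z ∈ K <;> simp [extendFn, h]
    simpa [Set.mem_setOf_eq, h] using hf.add hg
  zero_mem' := by
    have h : extendFn (0 : C(K, ℂ)) = fun _ => 0 := by
      funext z; by_cases h : z ∈ K <;> simp [extendFn, h]
    simpa [Set.mem_setOf_eq, h] using differentiableOn_const (0 : ℂ)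
  smul_mem' := by
    intro c f hf
    have h : extendFn (c • f) = c • extendFn f := by
      funext z; by_cases h : z ∈ K <;> simp [extendFn, h]
    simpa [Set.mem_setOf_eq, h] using hf.const_smul c

/-- The Banach space E. -/
abbrev E : Type := ↥Esub

/-- The constant function 1 as an element of E. -/
def oneE : E :=
  ⟨1, by
    have h : ∀ z ∈ interior K, extendFn (1 : C(K, ℂ)) z = 1 := by
      intro z hz; simp [extendFn, interior_subset hz]
    exact (differentiableOn_const (1 : ℂ)).congr h⟩

/-!
On the boundary circle `|z - 1| = 1/2` of `K` we have `|(f - Af)(z)| = |1 - z| |f(z)| = |f(z)| / 2`,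
so by the maximum modulus principle `‖f‖ ≤ 2 ‖f - Af‖`; then `‖(A - B) f‖ ≤ ε ‖f‖`.
-/

lemma extendFn_apply (f : C(K, ℂ)) (z : K) : extendFn f z = f z := by
  simp [extendFn, z.2]

lemma continuousOn_extendFn (f : C(K, ℂ)) : ContinuousOn (extendFn f) K := by
  rw [continuousOn_iff_continuous_domRestrict]
  convert f.continuous
  funext z
  exact extendFn_apply f z

lemma diffContOnCl_extendFn (f : E) : DiffContOnCl ℂ (extendFn f) (ball 1 (1/2)) := by
  have hr : (1/2 : ℝ) ≠ 0 := by norm_num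
  refine ⟨?_, ?_⟩
  · have hf : DifferentiableOn ℂ (extendFn f) (interior K) := f.2
    rwa [show interior K = ball 1 (1/2) from interior_closedBall _ hr] at hf
  · rw [closure_ball _ hr]
    exact continuousOn_extendFn f

theorem norm_le_of_forall_dist_eq_norm_le (f : E) {C : ℝ} (hC : 0 ≤ C)
    (hbdry : ∀ z : K, dist (z : ℂ) 1 = 1/2 → ‖(f : C(K, ℂ)) z‖ ≤ C) : ‖f‖ ≤ C := by
  have hr : (1/2 : ℝ) ≠ 0 := by norm_num
  refine (ContinuousMap.norm_le _ hC).mpr fun z => ?_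
  rw [← extendFn_apply]
  refine Complex.norm_le_of_forall_mem_frontier_norm_le isBounded_ball (diffContOnCl_extendFn f)
    (fun w hw => ?_) (by rw [closure_ball _ hr]; exact z.2)
  rw [frontier_ball _ hr] at hw
  have hwK : w ∈ K := sphere_subset_closedBall hw
  rw [show w = ((⟨w, hwK⟩ : K) : ℂ) from rfl, extendFn_apply]
  exact hbdry _ hw

theorem norm_le_two_mul_norm_of_apply_eq_one_sub_mul {f g : E}
    (hg : ∀ z : K, (g : C(K, ℂ)) z = (1 - (z : ℂ)) * (f : C(K, ℂ)) z) : ‖f‖ ≤ 2 * ‖g‖ := by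
  refine norm_le_of_forall_dist_eq_norm_le f (by positivity) fun z hz => ?_
  have h1z : ‖1 - (z : ℂ)‖ = 1/2 := by rw [norm_sub_rev, ← dist_eq_norm, hz]
  have hgz : ‖(g : C(K, ℂ)) z‖ ≤ ‖g‖ := (g : C(K, ℂ)).norm_coe_le_norm z
  rw [hg, norm_mul, h1z] at hgz
  linarith

theorem perturbation_bound_general (A : E →L[ℂ] E)
    (hA : ∀ (f : E) (z : K), ((A f : C(K, ℂ)) z) = (z : ℂ) * ((f : C(K, ℂ)) z))
    (ε : ℝ) (B : E →L[ℂ] E) (hB : ‖A - B‖ ≤ ε) :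
    ∀ f : E, ‖(A - B) f‖ ≤ 2 * ε * ‖f - A f‖ := by
  intro f
  have hf : ‖f‖ ≤ 2 * ‖f - A f‖ := norm_le_two_mul_norm_of_apply_eq_one_sub_mul fun z => by
    rw [Submodule.coe_sub, ContinuousMap.sub_apply, hA]
    ring
  calc ‖(A - B) f‖ ≤ ε * ‖f‖ := (A - B).le_of_opNorm_le hB f
    _ ≤ ε * (2 * ‖f - A f‖) := mul_le_mul_of_nonneg_left hf ((norm_nonneg (A - B)).trans hB)
    _ = 2 * ε * ‖f - A f‖ := by ring

/-- If ‖A − B‖ ≤ ε then ‖(A − B)f‖ ≤ 2ε·‖f − Af‖ for every f ∈ E. -/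
theorem perturbation_bound (A : E →L[ℂ] E)
    (hA : ∀ (f : E) (z : K), ((A f : C(K, ℂ)) z) = (z : ℂ) * ((f : C(K, ℂ)) z))
    (ε : ℝ) (hε : 0 < ε) (B : E →L[ℂ] E) (hB : ‖A - B‖ ≤ ε) :
    ∀ f : E, ‖(A - B) f‖ ≤ 2 * ε * ‖f - A f‖ :=
  perturbation_bound_general A hA ε B hB
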